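/- Let D : [0,∞) → [0,∞) be four times differentiable at 0 with D(0)=0, D'(0) > 0, D''(0) < 0, and let μ > √(−2D''(0)). Set m = −μ/√(−4D''(0)) and F(x) = −x²/2 + 2mx + Φ(x) with Φ the GOE edge rate function. Then the complexity exponent satisfies: −[m² + log|m| + (1/2)(1 + log 2)] + max_{x∈ℝ} F(x) = 0; equivalently F(x*) = m² + log|m| + (1/2)(1+log 2) at the maximizer x* = m + 1/(2m). -/

import Mathlib

/-- The GOE edge large-deviation rate function. -/
noncomputable def Phi (x : ℝ) : ℝ :=
  if Real.sqrt 2 ≤ |x| then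
    -(|x| * Real.sqrt (x ^ 2 - 2)) / 2 +
      Real.log ((|x| + Real.sqrt (x ^ 2 - 2)) / Real.sqrt 2)
  else 0


noncomputable def Gm (m t : ℝ) : ℝ :=
  -t^2 + 2*m*t + m/t + Real.log (-t) - 1/2 + Real.log 2 / 2

lemma log_ineq1 (r : ℝ) (hr : 1 ≤ r) : r - 1 - Real.log r ≤ (r - 1)^2 / 2 := by
  set f : ℝ → ℝ := fun y => (y-1)^2/2 + Real.log y - (y-1) with hfdef
  have hder : ∀ x : ℝ, 0 < x → HasDerivAt f (x - 1 + x⁻¹ - 1) x := by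
    intro x hx
    have h1 : HasDerivAt (fun y : ℝ => y - 1) 1 x := (hasDerivAt_id x).sub_const 1
    have h2 : HasDerivAt (fun y : ℝ => (y-1)^2/2) (x-1) x := by
      have h := (h1.pow 2).div_const 2
      norm_num at h
      convert h using 1 <;> ring
    have h3 := Real.hasDerivAt_log (ne_of_gt hx)
    have h := (h2.add h3).sub h1
    exact h.congr_deriv (by ring)
  have hmono : MonotoneOn f (Set.Ici 1) := by
    apply monotoneOn_of_deriv_nonneg (convex_Ici 1)
    · exact fun x hx => (hder x (lt_of_lt_of_le one_pos hx)).continuousAt.continuousWithinAt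
    · intro x hx
      rw [interior_Ici] at hx
      simp only [Set.mem_Ioi] at hx
      exact (hder x (lt_trans one_pos hx)).differentiableAt.differentiableWithinAt
    · intro x hx
      rw [interior_Ici] at hx
      simp only [Set.mem_Ioi] at hx
      rw [(hder x (lt_trans one_pos hx)).deriv]
      have hxi : x * x⁻¹ = 1 := mul_inv_cancel₀ (by linarith)
      nlinarith [sq_nonneg (x-1)]
  have h0 : f 1 ≤ f r := hmono (by simp) (by simpa using hr) hr
  have hf1 : f 1 = 0 := by simp [hfdef]
  simp only [hfdef] at h0 hf1
  simp only [hf1] at h0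
  linarith [h0]

lemma log_ineq2 (r : ℝ) (hr0 : 0 < r) (hr1 : r ≤ 1) :
    r - 1 - Real.log r ≤ (1 - r⁻¹)^2 / 2 := by
  set f : ℝ → ℝ := fun y => (1 - y⁻¹)^2/2 + Real.log y - (y-1) with hfdef
  have hder : ∀ x : ℝ, 0 < x → HasDerivAt f ((1 - x⁻¹) * (x^2)⁻¹ + x⁻¹ - 1) x := by
    intro x hx
    have h1 : HasDerivAt (fun y : ℝ => y⁻¹) (-(x^2)⁻¹) x := hasDerivAt_inv (ne_of_gt hx)
    have h2 : HasDerivAt (fun y : ℝ => 1 - y⁻¹) ((x^2)⁻¹) x := by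
      have h := h1.const_sub 1
      exact h.congr_deriv (by ring)
    have h3 : HasDerivAt (fun y : ℝ => (1 - y⁻¹)^2/2) ((1 - x⁻¹) * (x^2)⁻¹) x := by
      have h := (h2.pow 2).div_const 2
      norm_num at h
      exact h.congr_deriv (by ring)
    have h4 := Real.hasDerivAt_log (ne_of_gt hx)
    have h5 : HasDerivAt (fun y : ℝ => y - 1) 1 x := (hasDerivAt_id x).sub_const 1
    have h := (h3.add h4).sub h5
    exact h.congr_deriv (by ring)
  have hanti : AntitoneOn f (Set.Ioc 0 1) := by
    apply antitoneOn_of_deriv_nonpos (convex_Ioc 0 1)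
    · exact fun x hx => (hder x hx.1).continuousAt.continuousWithinAt
    · intro x hx
      rw [interior_Ioc] at hx
      exact (hder x hx.1).differentiableAt.differentiableWithinAt
    · intro x hx
      rw [interior_Ioc] at hx
      rw [(hder x hx.1).deriv]
      have hx0 : (0:ℝ) < x := hx.1
      have hrw : (1 - x⁻¹) * (x^2)⁻¹ + x⁻¹ - 1 = -((1-x)^2*(1+x)/x^3) := by
        field_simp
        ring
      rw [hrw]
      have : 0 ≤ (1-x)^2*(1+x)/x^3 := by positivity
      linarith
  have h0 : f 1 ≤ f r := hanti ⟨hr0, hr1⟩ (by simp) hr1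
  have hf1 : f 1 = 0 := by simp [hfdef]
  simp only [hfdef] at h0 hf1
  simp only [hf1] at h0
  linarith [h0]

lemma phi_param (s : ℝ) (hs : s < 0) (hs2 : 1/2 ≤ s^2) :
    Phi (s + 1/(2*s)) = -(s^2 - 1/(4*s^2))/2 + Real.log (-s) + Real.log 2 / 2 := by
  have hs0 : s ≠ 0 := ne_of_lt hs
  have hinv : 1/(2*s) < 0 := by
    apply div_neg_of_pos_of_neg one_pos
    linarith
  have hx : s + 1/(2*s) < 0 := by linarith
  have habs : |s + 1/(2*s)| = -(s + 1/(2*s)) := abs_of_neg hx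
  have hsq2 : Real.sqrt 2 * Real.sqrt 2 = 2 := Real.mul_self_sqrt (by norm_num)
  have hsqpos : (0:ℝ) < Real.sqrt 2 := Real.sqrt_pos.mpr (by norm_num)
  have hx2 : (s + 1/(2*s))^2 - 2 = (s - 1/(2*s))^2 := by
    field_simp
    ring
  have hd : s - 1/(2*s) ≤ 0 := by
    have h : s - 1/(2*s) = (2*s^2 - 1)/(2*s) := by field_simp
    rw [h]
    apply div_nonpos_of_nonneg_of_nonpos (by linarith) (by linarith)
  have hsqrt : Real.sqrt ((s + 1/(2*s))^2 - 2) = -(s - 1/(2*s)) := by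
    rw [hx2, Real.sqrt_sq_eq_abs, abs_of_nonpos hd]
  have hge : Real.sqrt 2 ≤ |s + 1/(2*s)| := by
    rw [habs]
    have key : -(s + 1/(2*s)) = (2*s^2 + 1)/(-(2*s)) := by field_simp
    rw [key, le_div_iff₀ (by linarith : (0:ℝ) < -(2*s))]
    nlinarith [sq_nonneg (Real.sqrt 2 * s + 1)]
  rw [Phi, if_pos hge, habs, hsqrt]
  have hlog : (-(s + 1/(2*s)) + -(s - 1/(2*s))) / Real.sqrt 2 = Real.sqrt 2 * (-s) := by
    field_simp
    nlinarith [hsq2]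
  rw [hlog, Real.log_mul (ne_of_gt hsqpos) (by linarith : -s ≠ 0), Real.log_sqrt (by norm_num)]
  field_simp
  ring

lemma phi_neg (x : ℝ) : Phi (-x) = Phi x := by
  unfold Phi
  rw [abs_neg]
  norm_num

lemma aux_sqrt2_le (m : ℝ) (hmneg : m < 0) (hm2 : 1/2 ≤ m^2) :
    Real.sqrt 2 ≤ -(2*m) := by
  have hsq2 : Real.sqrt 2 * Real.sqrt 2 = 2 := Real.mul_self_sqrt (by norm_num)
  have hsqpos : (0:ℝ) < Real.sqrt 2 := Real.sqrt_pos.mpr (by norm_num)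
  nlinarith [hsq2, hsqpos, hm2, hmneg]

lemma aux_quad (m x : ℝ) (h2 : Real.sqrt 2 ≤ -(2*m)) (hx1 : -Real.sqrt 2 < x) :
    -x^2/2 + 2*m*x ≤ -1 - 2*Real.sqrt 2*m := by
  have hsq2 : Real.sqrt 2 * Real.sqrt 2 = 2 := Real.mul_self_sqrt (by norm_num)
  have h1 : 0 ≤ (-(2*m) - Real.sqrt 2) * (Real.sqrt 2 + x) :=
    mul_nonneg (by linarith) (by linarith)
  nlinarith [sq_nonneg (x + Real.sqrt 2), hsq2]

lemma G_le (m s : ℝ) (hm : m < 0) (hs : s < 0) (hm2 : 1/2 ≤ m^2) (hs2 : 1/2 ≤ s^2) :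
    Gm m s ≤ Gm m m := by
  have hm0 : m ≠ 0 := ne_of_lt hm
  have hs0 : s ≠ 0 := ne_of_lt hs
  set r : ℝ := m / s with hrdef
  have hr : 0 < r := div_pos_of_neg_of_neg hm hs
  have hr0 : r ≠ 0 := ne_of_gt hr
  have hmr : m = r * s := by rw [hrdef]; field_simp
  have hlog : Real.log (-m) = Real.log r + Real.log (-s) := by
    have : -m = r * (-s) := by rw [hmr]; ring
    rw [this, Real.log_mul hr0 (by linarith : -s ≠ 0)]
  have key : r - 1 - Real.log r ≤ (m - s)^2 := by
    rcases le_or_gt 1 r with h1 | h1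
    · have hl1 := log_ineq1 r h1
      have hexp : (m - s)^2 = (r - 1)^2 * s^2 := by rw [hmr]; ring
      nlinarith [sq_nonneg (r-1)]
    · have hl2 := log_ineq2 r hr h1.le
      have hseq : s = m / r := by rw [hmr]; field_simp
      have hexp : (m - s)^2 = (1 - r⁻¹)^2 * m^2 := by
        rw [hseq]; field_simp
      nlinarith [sq_nonneg (1 - r⁻¹)]
  have hdivm : m / m = 1 := div_self hm0
  have hdivs : m / s = r := rfl
  unfold Gm
  rw [hdivm, hdivs, hlog]
  nlinarith [key]

/-- In the topology trivialization regime `μ > √(−2D''(0))`, the complexity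
exponent vanishes: `−[m² + log|m| + (1/2)(1+log 2)] + max F = 0`, where the
maximum of `F` is attained at `x* = m + 1/(2m)`. -/
theorem complexity_exponent_trivial
    (D : ℝ → ℝ) (μ : ℝ)
    (hD0 : D 0 = 0) (hD1 : 0 < deriv D 0) (hD2 : deriv (deriv D) 0 < 0)
    (hμ : Real.sqrt (-2 * deriv (deriv D) 0) < μ)
    (m : ℝ) (hm : m = -μ / Real.sqrt (-4 * deriv (deriv D) 0))
    (F : ℝ → ℝ) (hF : ∀ x, F x = -x ^ 2 / 2 + 2 * m * x + Phi x) :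
    IsGreatest (Set.range F) (F (m + 1 / (2 * m))) ∧
    F (m + 1 / (2 * m)) = m ^ 2 + Real.log |m| + (1 / 2) * (1 + Real.log 2) ∧
    -(m ^ 2 + Real.log |m| + (1 / 2) * (1 + Real.log 2)) +
      F (m + 1 / (2 * m)) = 0 := by
  set c := deriv (deriv D) 0 with hc
  -- basic facts about m
  have h2c : (0:ℝ) < -2 * c := by linarith
  have h4c : (0:ℝ) < -4 * c := by linarith
  have ha : 0 < Real.sqrt (-2 * c) := Real.sqrt_pos.mpr h2c
  have hb : 0 < Real.sqrt (-4 * c) := Real.sqrt_pos.mpr h4c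
  have hμpos : 0 < μ := lt_trans ha hμ
  have hmneg : m < 0 := by
    rw [hm]
    exact div_neg_of_neg_of_pos (by linarith) hb
  have hm0 : m ≠ 0 := ne_of_lt hmneg
  have hmbeq : m * Real.sqrt (-4 * c) = -μ := by
    rw [hm, div_mul_cancel₀ _ (ne_of_gt hb)]
  have hb2 : (Real.sqrt (-4 * c))^2 = -4 * c := Real.sq_sqrt h4c.le
  have hmb2 : m^2 * (-4 * c) = μ^2 := by
    rw [← hb2]
    linear_combination (m * Real.sqrt (-4 * c) - μ) * hmbeq
  have ha2 : (Real.sqrt (-2 * c))^2 = -2 * c := Real.sq_sqrt h2c.le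
  have hμ2 : -2 * c < μ^2 := by nlinarith
  have hm2 : 1/2 ≤ m^2 := by nlinarith
  -- F in terms of Gm
  have hFs : ∀ s : ℝ, s < 0 → 1/2 ≤ s^2 → F (s + 1/(2*s)) = Gm m s := by
    intro s hs hs2
    rw [hF, phi_param s hs hs2]
    unfold Gm
    have hs0 : s ≠ 0 := ne_of_lt hs
    field_simp
    ring
  have hFstar : F (m + 1/(2*m)) = Gm m m := hFs m hmneg hm2
  -- value of Gm m m
  have hval : Gm m m = m ^ 2 + Real.log |m| + (1/2) * (1 + Real.log 2) := by
    unfold Gm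
    rw [div_self hm0, abs_of_neg hmneg]
    ring
  -- max over x ≤ -√2
  have hsq2 : Real.sqrt 2 * Real.sqrt 2 = 2 := Real.mul_self_sqrt (by norm_num)
  have hsqpos : (0:ℝ) < Real.sqrt 2 := Real.sqrt_pos.mpr (by norm_num)
  have main_neg : ∀ x : ℝ, x ≤ -Real.sqrt 2 → F x ≤ F (m + 1/(2*m)) := by
    intro x hx
    have hxneg : x < 0 := by linarith
    have hx2 : 2 ≤ x^2 := by nlinarith
    set w := Real.sqrt (x^2 - 2) with hw
    have hw2 : w^2 = x^2 - 2 := Real.sq_sqrt (by linarith)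
    have hw0 : 0 ≤ w := Real.sqrt_nonneg _
    set s := (x - w)/2 with hsdef
    have hs : s < 0 := by
      rw [hsdef]; apply div_neg_of_neg_of_pos _ two_pos; linarith
    have hs0 : s ≠ 0 := ne_of_lt hs
    have hs2 : 1/2 ≤ s^2 := by
      have hsle : s ≤ x/2 := by rw [hsdef]; linarith
      nlinarith
    have hquad : 2*s^2 - 2*x*s + 1 = 0 := by
      rw [hsdef]
      linear_combination (1/2) * hw2
    have hxeq : x = s + 1/(2*s) := by
      field_simp
      linear_combination -hquad
    calc F x = Gm m s := by rw [hxeq]; exact hFs s hs hs2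
      _ ≤ Gm m m := G_le m s hmneg hs hm2 hs2
      _ = F (m + 1/(2*m)) := hFstar.symm
  -- upper bound for all x
  have hub : ∀ x : ℝ, F x ≤ F (m + 1/(2*m)) := by
    intro x
    by_cases hcase : Real.sqrt 2 ≤ |x|
    · rcases le_or_gt x 0 with hx0 | hx0
      · apply main_neg
        rw [abs_of_nonpos hx0] at hcase
        linarith
      · -- x ≥ √2 > 0 : compare with -x
        rw [abs_of_pos hx0] at hcase
        have hphi_even : Phi (-x) = Phi x := phi_neg x
        have hFle : F x ≤ F (-x) := by
          rw [hF, hF, hphi_even]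
          have hmx : m * x < 0 := mul_neg_of_neg_of_pos hmneg hx0
          have hsq : (-x)^2 = x^2 := by ring
          rw [hsq]
          linarith
        calc F x ≤ F (-x) := hFle
          _ ≤ F (m + 1/(2*m)) := main_neg (-x) (by linarith)
    · -- |x| < √2 : Phi x = 0
      push_neg at hcase
      have habs := abs_lt.mp hcase
      have hFx : F x = -x^2/2 + 2*m*x := by
        rw [hF, Phi, if_neg (not_le.mpr hcase)]
        ring
      -- √2 ≤ -2m
      have hmsqrt2 : Real.sqrt 2 ≤ -(2*m) := aux_sqrt2_le m hmneg hm2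
      -- F x ≤ F(-√2)
      have hFneg : F (-Real.sqrt 2) ≤ F (m + 1/(2*m)) := main_neg _ (le_refl _)
      have hphi0 : Phi (-Real.sqrt 2) = 0 := by
        unfold Phi
        rw [abs_neg, abs_of_pos hsqpos, if_pos (le_refl _)]
        have h0 : (-Real.sqrt 2)^2 - 2 = 0 := by
          rw [neg_pow]
          rw [Real.sq_sqrt (by norm_num : (0:ℝ) ≤ 2)]
          ring
        rw [h0, Real.sqrt_zero]
        have h1 : (Real.sqrt 2 + 0)/Real.sqrt 2 = 1 := by
          rw [add_zero]; exact div_self (ne_of_gt hsqpos)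
        rw [h1, Real.log_one]
        ring
      have hFv : F (-Real.sqrt 2) = -1 - 2*Real.sqrt 2*m := by
        rw [hF, hphi0]
        have : (-Real.sqrt 2)^2 = 2 := by
          rw [neg_pow, Real.sq_sqrt (by norm_num : (0:ℝ) ≤ 2)]
          ring
        rw [this]
        ring
      have hq : -x^2/2 + 2*m*x ≤ -1 - 2*Real.sqrt 2*m := aux_quad m x hmsqrt2 habs.1
      rw [hFx]
      calc -x^2/2 + 2*m*x ≤ -1 - 2*Real.sqrt 2*m := hq
        _ = F (-Real.sqrt 2) := hFv.symm
        _ ≤ F (m + 1/(2*m)) := hFneg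
  refine ⟨⟨⟨m + 1/(2*m), rfl⟩, ?_⟩, ?_, ?_⟩
  · rintro y ⟨x, rfl⟩
    exact hub x
  · rw [hFstar, hval]
  · rw [hFstar, hval]; ring
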